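/- arXiv:1705.03745 — 2 statements merged into one kernel-verified Lean document; each statement's English description precedes it below -/
import Mathlib

section
/- Let n ∈ ℕ, l ≥ 1 an integer, γ > 0, and define h(t) = t^2 (log^n(1/t))^γ. If 0 < t_j ≤ 1/exp^n(2) for 1 ≤ j ≤ l, then h(t_1 t_2 ⋯ t_l) ≤ ∏_{j=1}^l h(t_j). -/
private lemma exp_iter_ge_two (n : ℕ) : 2 ≤ Real.exp^[n] 2 := by
  induction n with
  | zero => simp
  | succ n ih =>
    rw [Function.iterate_succ_apply']
    linarith [Real.add_one_le_exp (Real.exp^[n] 2)]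

private lemma log_iter_exp_iter (n : ℕ) (x : ℝ) :
    Real.log^[n] (Real.exp^[n] x) = x := by
  induction n generalizing x with
  | zero => simp
  | succ n ih =>
    rw [Function.iterate_succ_apply, Function.iterate_succ_apply', Real.log_exp, ih]

private lemma log_iter_mono (n : ℕ) {x y : ℝ} (hx : Real.exp^[n] 2 ≤ x) (hxy : x ≤ y) :
    Real.log^[n] x ≤ Real.log^[n] y := by
  induction n generalizing x y with
  | zero => exact hxy
  | succ n ih =>
    rw [Function.iterate_succ_apply' Real.exp] at hx
    have hxpos : (0:ℝ) < x := lt_of_lt_of_le (Real.exp_pos _) hx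
    have h1 : Real.exp^[n] 2 ≤ Real.log x := by
      have := Real.log_le_log (Real.exp_pos _) hx
      rwa [Real.log_exp] at this
    rw [Function.iterate_succ_apply, Function.iterate_succ_apply]
    exact ih h1 (Real.log_le_log hxpos hxy)

private lemma two_le_log_iter (n : ℕ) {x : ℝ} (hx : Real.exp^[n] 2 ≤ x) :
    2 ≤ Real.log^[n] x := by
  have := log_iter_mono n le_rfl hx
  rwa [log_iter_exp_iter] at this

private lemma log_iter_mul (n : ℕ) {a b : ℝ} (ha : Real.exp^[n] 2 ≤ a)
    (hb : Real.exp^[n] 2 ≤ b) :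
    Real.log^[n] (a * b) ≤ Real.log^[n] a * Real.log^[n] b := by
  induction n generalizing a b with
  | zero => simp
  | succ n ih =>
    have h2 := exp_iter_ge_two (n + 1)
    have hapos : (0:ℝ) < a := by linarith
    have hbpos : (0:ℝ) < b := by linarith
    have hla : Real.exp^[n] 2 ≤ Real.log a := by
      rw [Function.iterate_succ_apply' Real.exp] at ha
      have := Real.log_le_log (Real.exp_pos _) ha
      rwa [Real.log_exp] at this
    have hlb : Real.exp^[n] 2 ≤ Real.log b := by
      rw [Function.iterate_succ_apply' Real.exp] at hb
      have := Real.log_le_log (Real.exp_pos _) hb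
      rwa [Real.log_exp] at this
    have h2n := exp_iter_ge_two n
    have hsum : Real.log a + Real.log b ≤ Real.log a * Real.log b := by nlinarith
    rw [Function.iterate_succ_apply, Function.iterate_succ_apply,
      Function.iterate_succ_apply, Real.log_mul (ne_of_gt hapos) (ne_of_gt hbpos)]
    calc Real.log^[n] (Real.log a + Real.log b)
        ≤ Real.log^[n] (Real.log a * Real.log b) :=
          log_iter_mono n (by linarith) hsum
      _ ≤ Real.log^[n] (Real.log a) * Real.log^[n] (Real.log b) := ih hla hlb

private lemma log_iter_prod (n : ℕ) {ι : Type*} (s : Finset ι) (hs : s.Nonempty)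
    (f : ι → ℝ) (hf : ∀ j ∈ s, Real.exp^[n] 2 ≤ f j) :
    Real.exp^[n] 2 ≤ ∏ j ∈ s, f j ∧
      Real.log^[n] (∏ j ∈ s, f j) ≤ ∏ j ∈ s, Real.log^[n] (f j) := by
  induction hs using Finset.Nonempty.cons_induction with
  | singleton a => simpa using hf a (Finset.mem_singleton_self a)
  | cons a s ha hs ih =>
    have hf' : ∀ j ∈ s, Real.exp^[n] 2 ≤ f j := fun j hj => hf j (Finset.mem_cons_of_mem hj)
    have hfa : Real.exp^[n] 2 ≤ f a := hf a (Finset.mem_cons_self a s)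
    obtain ⟨h1, h2⟩ := ih hf'
    have h2n := exp_iter_ge_two n
    have hprod : Real.exp^[n] 2 ≤ f a * ∏ j ∈ s, f j := by nlinarith
    refine ⟨by rwa [Finset.prod_cons], ?_⟩
    rw [Finset.prod_cons, Finset.prod_cons]
    calc Real.log^[n] (f a * ∏ j ∈ s, f j)
        ≤ Real.log^[n] (f a) * Real.log^[n] (∏ j ∈ s, f j) := log_iter_mul n hfa h1
      _ ≤ Real.log^[n] (f a) * ∏ j ∈ s, Real.log^[n] (f j) := by
          have := two_le_log_iter n hfa
          exact mul_le_mul_of_nonneg_left h2 (by linarith)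

/-- Multiplicativity of the gauge function `h(t) = t^2 (log^n(1/t))^γ`:
`h(t_1⋯t_l) ≤ ∏_j h(t_j)` when `0 < t_j ≤ 1/exp^n(2)`. -/
theorem stmt3 (n l : ℕ) (hl : 1 ≤ l) (γ : ℝ) (hγ : 0 < γ)
    (h : ℝ → ℝ) (hh : ∀ t, h t = t ^ 2 * (Real.log^[n] (1 / t)) ^ γ)
    (t : Fin l → ℝ) (hpos : ∀ j, 0 < t j) (hle : ∀ j, t j ≤ 1 / Real.exp^[n] 2) :
    h (∏ j, t j) ≤ ∏ j, h (t j) := by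
  have hexp : (0:ℝ) < Real.exp^[n] 2 := by linarith [exp_iter_ge_two n]
  have hinv : ∀ j, Real.exp^[n] 2 ≤ 1 / t j := by
    intro j
    rw [le_div_iff₀ (hpos j)]
    calc Real.exp^[n] 2 * t j ≤ Real.exp^[n] 2 * (1 / Real.exp^[n] 2) :=
          mul_le_mul_of_nonneg_left (hle j) (le_of_lt hexp)
      _ = 1 := by field_simp
  have hinvprod : (1 : ℝ) / ∏ j, t j = ∏ j, (1 / t j) := by
    rw [Finset.prod_div_distrib]
    simp
  obtain ⟨hP1, hP2⟩ := log_iter_prod n Finset.univ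
    (Finset.univ_nonempty_iff.mpr (Fin.pos_iff_nonempty.mp hl))
    (fun j => 1 / t j) (fun j _ => hinv j)
  have hL : (2:ℝ) ≤ Real.log^[n] (1 / ∏ j, t j) := by
    rw [hinvprod]; exact two_le_log_iter n hP1
  have hnonneg : ∀ j, (0:ℝ) ≤ Real.log^[n] (1 / t j) := by
    intro j; linarith [two_le_log_iter n (hinv j)]
  have key : Real.log^[n] (1 / ∏ j, t j) ≤ ∏ j, Real.log^[n] (1 / t j) := by
    rw [hinvprod]; exact hP2
  have hrpow : (Real.log^[n] (1 / ∏ j, t j)) ^ γ ≤ ∏ j, (Real.log^[n] (1 / t j)) ^ γ := by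
    calc (Real.log^[n] (1 / ∏ j, t j)) ^ γ
        ≤ (∏ j, Real.log^[n] (1 / t j)) ^ γ :=
          Real.rpow_le_rpow (by linarith) key (le_of_lt hγ)
      _ = ∏ j, (Real.log^[n] (1 / t j)) ^ γ :=
          (Real.finset_prod_rpow Finset.univ _ (fun j _ => hnonneg j) γ).symm
  rw [hh]
  calc (∏ j, t j) ^ 2 * (Real.log^[n] (1 / ∏ j, t j)) ^ γ
      ≤ (∏ j, t j) ^ 2 * ∏ j, (Real.log^[n] (1 / t j)) ^ γ := by
        apply mul_le_mul_of_nonneg_left hrpow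
        positivity
    _ = ∏ j, (t j ^ 2 * (Real.log^[n] (1 / t j)) ^ γ) := by
        rw [Finset.prod_mul_distrib, Finset.prod_pow]
    _ = ∏ j, h (t j) := by
        refine Finset.prod_congr rfl fun j _ => ?_
        rw [hh]
end

section
/- Let n ∈ ℕ and let k, l be real numbers with exp^n(2) ≤ k < l. Then k (log k)(log^2 k)⋯(log^n k) · log(log^n l / log^n k) ≥ (log 2)^{n+1} min{k, l − k}. -/
lemma log_one_add_ge (x : ℝ) (hx0 : 0 < x) (hx1 : x ≤ 1) :
    x * Real.log 2 ≤ Real.log (1 + x) := by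
  have h := convexOn_exp.2 (Set.mem_univ (0:ℝ)) (Set.mem_univ (Real.log 2))
      (by linarith : (0:ℝ) ≤ 1 - x) hx0.le (by ring)
  simp only [smul_eq_mul, mul_zero, zero_add, Real.exp_zero,
    Real.exp_log two_pos] at h
  have h2 : Real.exp (x * Real.log 2) ≤ 1 + x := by linarith
  calc x * Real.log 2 = Real.log (Real.exp (x * Real.log 2)) := (Real.log_exp _).symm
    _ ≤ Real.log (1 + x) := Real.log_le_log (Real.exp_pos _) h2

lemma klemma (k l : ℝ) (hk : 2 ≤ k) (hkl : k < l) :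
    Real.log 2 * min k (l - k) ≤ k * Real.log (l / k) := by
  have hk0 : (0:ℝ) < k := by linarith
  have hl0 : (0:ℝ) < l := by linarith
  by_cases h : l ≤ 2 * k
  · have hmin : min k (l - k) = l - k := min_eq_right (by linarith)
    rw [hmin]
    have hx0 : 0 < (l - k) / k := div_pos (by linarith) hk0
    have hx1 : (l - k) / k ≤ 1 := by rw [div_le_one hk0]; linarith
    have hlog := log_one_add_ge _ hx0 hx1
    have heq : 1 + (l - k) / k = l / k := by field_simp; ring
    rw [heq] at hlog
    calc Real.log 2 * (l - k) = k * ((l - k) / k * Real.log 2) := by field_simp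
      _ ≤ k * Real.log (l / k) := mul_le_mul_of_nonneg_left hlog hk0.le
  · push_neg at h
    have hmin : min k (l - k) = k := min_eq_left (by linarith)
    rw [hmin]
    have hll : Real.log 2 ≤ Real.log (l / k) := by
      apply Real.log_le_log two_pos
      rw [le_div_iff₀ hk0]; linarith
    nlinarith

lemma two_le_exp_iter (n : ℕ) : (2:ℝ) ≤ Real.exp^[n] 2 := by
  induction n with
  | zero => simp
  | succ n ih =>
    rw [Function.iterate_succ_apply']
    have h1 : (2:ℝ) ≤ Real.exp 2 := by
      have := Real.add_one_le_exp (2:ℝ); linarith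
    calc (2:ℝ) ≤ Real.exp 2 := h1
      _ ≤ Real.exp (Real.exp^[n] 2) := Real.exp_le_exp.mpr ih

lemma aux11 (n : ℕ) : ∀ k l : ℝ, Real.exp^[n] 2 ≤ k → k < l →
    (Real.log 2) ^ (n + 1) * min k (l - k) ≤
      k * (∏ i ∈ Finset.range n, Real.log^[i + 1] k) *
        Real.log (Real.log^[n] l / Real.log^[n] k) := by
  induction n with
  | zero =>
    intro k l hk hkl
    simp only [Finset.range_zero, Finset.prod_empty, mul_one, zero_add, pow_one,
      Function.iterate_zero, id_eq]
    exact klemma k l (by simpa using hk) hkl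
  | succ n ih =>
    intro k l hk hkl
    have h2k : (2:ℝ) ≤ k := le_trans (two_le_exp_iter _) hk
    have hk0 : (0:ℝ) < k := by linarith
    have hl0 : (0:ℝ) < l := by linarith
    have hlogk : Real.exp^[n] 2 ≤ Real.log k := by
      rw [Function.iterate_succ_apply' Real.exp n 2] at hk
      rw [Real.le_log_iff_exp_le hk0]
      exact hk
    have hloglt : Real.log k < Real.log l := Real.log_lt_log hk0 hkl
    have H := ih (Real.log k) (Real.log l) hlogk hloglt
    have h2lk : (2:ℝ) ≤ Real.log k := le_trans (two_le_exp_iter n) hlogk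
    have hprod : (∏ i ∈ Finset.range (n + 1), Real.log^[i + 1] k)
        = (∏ i ∈ Finset.range n, Real.log^[i + 1] (Real.log k)) * Real.log k := by
      rw [Finset.prod_range_succ']
      congr 1
    rw [hprod, Function.iterate_succ_apply Real.log n l,
      Function.iterate_succ_apply Real.log n k]
    have hlog2 : (0:ℝ) ≤ Real.log 2 := Real.log_nonneg one_le_two
    have key : Real.log 2 * min k (l - k)
        ≤ k * min (Real.log k) (Real.log l - Real.log k) := by
      rw [mul_min_of_nonneg _ _ hk0.le]
      apply le_min
      · have h1 : Real.log 2 * min k (l - k) ≤ Real.log 2 * k :=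
          mul_le_mul_of_nonneg_left (min_le_left _ _) hlog2
        have hl2 : Real.log 2 ≤ 1 := by
          have := Real.log_le_sub_one_of_pos (two_pos (α := ℝ)); linarith
        nlinarith
      · have hkl2 := klemma k l h2k hkl
        rw [Real.log_div hl0.ne' hk0.ne'] at hkl2
        exact le_trans hkl2 (le_refl _)
    calc (Real.log 2) ^ (n + 1 + 1) * min k (l - k)
        = (Real.log 2) ^ (n + 1) * (Real.log 2 * min k (l - k)) := by ring
      _ ≤ (Real.log 2) ^ (n + 1) * (k * min (Real.log k) (Real.log l - Real.log k)) :=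
          mul_le_mul_of_nonneg_left key (pow_nonneg hlog2 _)
      _ = k * ((Real.log 2) ^ (n + 1) * min (Real.log k) (Real.log l - Real.log k)) := by
          ring
      _ ≤ k * (Real.log k * (∏ i ∈ Finset.range n, Real.log^[i + 1] (Real.log k)) *
            Real.log (Real.log^[n] (Real.log l) / Real.log^[n] (Real.log k))) :=
          mul_le_mul_of_nonneg_left H hk0.le
      _ = _ := by ring

/-- For `exp^n(2) ≤ k < l`, one has
`k (log k)⋯(log^n k) · log(log^n l / log^n k) ≥ (log 2)^{n+1} min{k, l−k}`. -/
theorem stmt11 (n : ℕ) (k l : ℝ) (hk : Real.exp^[n] 2 ≤ k) (hkl : k < l) :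
    (Real.log 2) ^ (n + 1) * min k (l - k) ≤
      k * (∏ i ∈ Finset.Icc 1 n, Real.log^[i] k) *
        Real.log (Real.log^[n] l / Real.log^[n] k) := by
  have hicc : (∏ i ∈ Finset.Icc 1 n, Real.log^[i] k)
      = ∏ i ∈ Finset.range n, Real.log^[i + 1] k := by
    rw [← Finset.Ico_add_one_right_eq_Icc, Finset.prod_Ico_eq_prod_range]
    simp [Nat.add_comm]
  rw [hicc]
  exact aux11 n k l hk hkl
end
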